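/- arXiv:2110.00628 — 4 statements merged into one kernel-verified Lean document; each statement's English description precedes it below -/
import Mathlib

section
/- Let G be a finite simple undirected graph with no isolated vertices, X : V → ℝ a graph signal, and Δx_i := x_i − (1/deg(i)) Σ_{j ∈ N(i)} x_j. Suppose i and j are vertices with Δx_i < 0 < Δx_j, the edge {i,j} belongs to G, x_j < x_i, and both i and j have degree at least 2 in G. Then in G' = G − {i,j}, we have Δ'x_i < 0 and Δ'x_j > 0, where Δ' is computed with the edge set of G'. -/
open Finset

open scoped Classical in
noncomputable def gdeg {V : Type*} [Fintype V] (G : SimpleGraph V) (i : V) : ℝ :=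
  ∑ j, if G.Adj i j then (1:ℝ) else 0

open scoped Classical in
noncomputable def glap {V : Type*} [Fintype V] (G : SimpleGraph V) (x : V → ℝ) (i : V) : ℝ :=
  x i - (∑ j, if G.Adj i j then x j else 0) / gdeg G i

/-! Deleting the neighbour `j` of `i`, whose value is below `x i`, can only raise the average of
`x` over the neighbours of `i`, so `Δ'x_i` stays negative. The claim at `j` is the same fact
for the signal `-x`, since the Laplacian is odd in the signal. -/

namespace SimpleGraph

variable {V : Type*} [Fintype V] (G : SimpleGraph V)

theorem gdeg_eq_degree [DecidableRel G.Adj] (i : V) : gdeg G i = G.degree i := by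
  rw [gdeg, degree, neighborFinset_eq_filter, card_filter]
  push_cast
  exact sum_congr rfl fun k _ => by split_ifs <;> rfl

theorem glap_eq_sum_neighborFinset [DecidableRel G.Adj] (x : V → ℝ) (i : V) :
    glap G x i = x i - (∑ k ∈ G.neighborFinset i, x k) / G.degree i := by
  rw [glap, gdeg_eq_degree, neighborFinset_eq_filter, sum_filter]
  congr 2
  exact sum_congr rfl fun k _ => by split_ifs <;> rfl

theorem glap_neg (x : V → ℝ) (i : V) : glap G (-x) i = -glap G x i := by
  classical
  simp only [glap_eq_sum_neighborFinset, Pi.neg_apply, sum_neg_distrib]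
  ring

theorem neighborFinset_deleteEdges_singleton [DecidableRel G.Adj] [DecidableEq V] {i j : V} :
    (G.deleteEdges {s(i, j)}).neighborFinset i = (G.neighborFinset i).erase j := by
  ext k
  simp only [mem_neighborFinset, deleteEdges_adj, Set.mem_singleton_iff, mem_erase]
  constructor
  · rintro ⟨hik, hne⟩
    exact ⟨fun hkj => hne (hkj ▸ rfl), hik⟩
  · rintro ⟨hkj, hik⟩
    refine ⟨hik, ?_⟩
    rw [Sym2.eq_iff]
    rintro (⟨-, rfl⟩ | ⟨rfl, rfl⟩)
    · exact hkj rfl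
    · exact G.irrefl hik

theorem glap_deleteEdges_singleton_neg [DecidableRel G.Adj] {i j : V} (hadj : G.Adj i j)
    {x : V → ℝ} (hx : x j < x i) (hi : glap G x i < 0) (hdi : 2 ≤ G.degree i) :
    glap (G.deleteEdges {s(i, j)}) x i < 0 := by
  classical
  have hj : j ∈ G.neighborFinset i := (mem_neighborFinset G i j).2 hadj
  have hdeg : ((G.deleteEdges {s(i, j)}).degree i : ℝ) = G.degree i - 1 := by
    rw [← card_neighborFinset_eq_degree, neighborFinset_deleteEdges_singleton, card_erase_of_mem hj,
      card_neighborFinset_eq_degree, Nat.cast_sub (by omega), Nat.cast_one]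
  have hd : (2 : ℝ) ≤ G.degree i := by exact_mod_cast hdi
  rw [glap_eq_sum_neighborFinset, sub_neg, lt_div_iff₀ (by linarith)] at hi
  rw [glap_eq_sum_neighborFinset, neighborFinset_deleteEdges_singleton, sum_erase_eq_sub hj, hdeg,
    sub_neg, lt_div_iff₀ (by linarith)]
  linarith

end SimpleGraph

theorem stmt2_general {V : Type*} [Fintype V] (G : SimpleGraph V) [DecidableRel G.Adj]
    (x : V → ℝ) (i j : V)
    (hadj : G.Adj i j)
    (hi : glap G x i < 0) (hj : 0 < glap G x j) (hx : x j < x i)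
    (hdi : 2 ≤ G.degree i) (hdj : 2 ≤ G.degree j) :
    glap (G.deleteEdges {s(i, j)}) x i < 0 ∧ 0 < glap (G.deleteEdges {s(i, j)}) x j := by
  refine ⟨G.glap_deleteEdges_singleton_neg hadj hx hi hdi, ?_⟩
  have hneg : glap G (-x) j < 0 := by rw [SimpleGraph.glap_neg]; linarith
  have := G.glap_deleteEdges_singleton_neg hadj.symm (neg_lt_neg hx) hneg hdj
  rwa [Sym2.eq_swap, SimpleGraph.glap_neg, neg_lt_zero] at this

theorem stmt2 {V : Type*} [Fintype V] (G : SimpleGraph V) [DecidableRel G.Adj]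
    (hiso : ∀ v, ∃ w, G.Adj v w) (x : V → ℝ) (i j : V)
    (hadj : G.Adj i j)
    (hi : glap G x i < 0) (hj : 0 < glap G x j) (hx : x j < x i)
    (hdi : 2 ≤ G.degree i) (hdj : 2 ≤ G.degree j) :
    glap (G.deleteEdges {s(i, j)}) x i < 0 ∧ 0 < glap (G.deleteEdges {s(i, j)}) x j :=
  stmt2_general G x i j hadj hi hj hx hdi hdj
end

section
/- Let X = (x_1, …, x_N) be a time series and let G be the directed path on N vertices (with arcs (i, i+1) for 1 ≤ i ≤ N−1). For embedding dimension m ≥ 2 and delay L ≥ 1, the directed out-neighbourhood along k-step directed walks satisfies N→_k(i) = {i + k} if i + k ≤ N and ∅ otherwise, and hence the graph embedding vector y_i^{m,L} = (y_i^0, y_i^L, …, y_i^{(m−1)L}) with y_i^{kL} := average of x over N→_{kL}(i) equals the classical embedding vector (x_i, x_{i+L}, …, x_{i+(m−1)L}) for every i with i + (m−1)L ≤ N. -/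
open Finset

def stepFinset (N : ℕ) : ℕ → ℕ → Finset ℕ
  | 0, i => {i}
  | k+1, i => (stepFinset N k i).biUnion (fun j => if j + 1 ≤ N then {j + 1} else (∅ : Finset ℕ))

lemma stepFinset_eq (N : ℕ) (k i : ℕ) (hiN : i ≤ N) :
    stepFinset N k i = if i + k ≤ N then ({i + k} : Finset ℕ) else ∅ := by
  induction k with
  | zero => simp [stepFinset, hiN]
  | succ k ih =>
    rw [stepFinset, ih]
    by_cases h : i + k ≤ N
    · simp only [h, if_pos]
      rw [Finset.singleton_biUnion]
      by_cases h2 : i + k + 1 ≤ N <;> simp [h2, Nat.add_assoc]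
    · have h2 : ¬ i + (k + 1) ≤ N := fun hh => h (le_trans (by omega) hh)
      simp [h, h2]

theorem stmt7 (N m L : ℕ) (hm : 2 ≤ m) (hL : 1 ≤ L) (x : ℕ → ℝ) :
    (∀ k i, 1 ≤ i → i ≤ N →
      stepFinset N k i = if i + k ≤ N then ({i + k} : Finset ℕ) else ∅) ∧
    (∀ i, 1 ≤ i → i + (m - 1) * L ≤ N → ∀ k, k ≤ m - 1 →
      (∑ j ∈ stepFinset N (k * L) i, x j) / ((stepFinset N (k * L) i).card : ℝ)
        = x (i + k * L)) := by
  constructor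
  · intro k i _ hiN
    exact stepFinset_eq N k i hiN
  · intro i hi hN k hk
    have hkL : i + k * L ≤ N :=
      le_trans (by have := Nat.mul_le_mul_right L hk; omega) hN
    have hiN : i ≤ N := by omega
    rw [stepFinset_eq N (k * L) i hiN, if_pos hkL]
    simp
end

section
/- Since the embedding vectors of the graph permutation entropy on the directed path coincide with the classical embedding vectors of the time series (for any m ≥ 2 and L ≥ 1), the resulting ordinal pattern distribution, and hence the permutation entropy values, are equal: PE(m, L) = PE_G(m, L) for G the directed path on N vertices. -/
open Finset

open scoped Classical in
noncomputable def pattern (m : ℕ) (v : Fin m → ℝ) : List (Fin m) :=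
  (List.finRange m).mergeSort (fun a b => decide (v a < v b ∨ (v a = v b ∧ a ≤ b)))

open scoped Classical in
noncomputable def shannonF {α β : Type*} (s : Finset α) (f : α → β) : ℝ :=
  ∑ b ∈ s.image f,
    -((((s.filter (fun a => f a = b)).card : ℝ) / s.card) *
      Real.log (((s.filter (fun a => f a = b)).card : ℝ) / s.card))

/- On the directed path 1 → 2 → ⋯ → N the only walk of length k from i ends at i + k, so the graph
embedding vector at i is the classical one (x_i, x_{i+L}, …, x_{i+(m-1)L}), and it is defined
exactly for i ≤ N - (m-1)L. Both entropies are therefore computed from the same map on the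
same index set. -/

lemma stepFinset_of_le {N i : ℕ} (hi : i ≤ N) (k : ℕ) :
    stepFinset N k i = if i + k ≤ N then {i + k} else ∅ := by
  induction k with
  | zero => simp [stepFinset, hi]
  | succ k ih =>
    rw [stepFinset, ih]
    split_ifs <;> simp [← add_assoc] <;> omega

lemma stepFinset_nonempty_iff {N i : ℕ} (hi : i ≤ N) (k : ℕ) :
    (stepFinset N k i).Nonempty ↔ i + k ≤ N := by
  rw [stepFinset_of_le hi]
  split_ifs with h <;> simp [h]

lemma filter_stepFinset_nonempty (N k : ℕ) :
    (Icc 1 N).filter (fun i => (stepFinset N k i).Nonempty) = Icc 1 (N - k) := by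
  ext i
  simp only [mem_filter, mem_Icc]
  constructor
  · rintro ⟨⟨h1, hiN⟩, hne⟩
    have := (stepFinset_nonempty_iff hiN k).mp hne
    omega
  · rintro ⟨h1, h2⟩
    have hiN : i ≤ N := by omega
    exact ⟨⟨h1, hiN⟩, (stepFinset_nonempty_iff hiN k).mpr (by omega)⟩

lemma average_stepFinset {N i k : ℕ} (h : i + k ≤ N) (x : ℕ → ℝ) :
    (∑ j ∈ stepFinset N k i, x j) / ((stepFinset N k i).card : ℝ) = x (i + k) := by
  simp [stepFinset_of_le (show i ≤ N by omega), h]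

open scoped Classical in
lemma shannonF_congr {α β : Type*} {s : Finset α} {f g : α → β}
    (h : ∀ a ∈ s, f a = g a) : shannonF s f = shannonF s g := by
  unfold shannonF
  rw [image_congr h]
  refine sum_congr rfl fun b _ => ?_
  rw [filter_congr fun a ha => by rw [h a ha]]

theorem stmt8_general (N m L : ℕ) (x : ℕ → ℝ) :
    shannonF (Finset.Icc 1 (N - (m - 1) * L))
      (fun i => pattern m (fun k => x (i + (k : ℕ) * L)))
      = shannonF ((Finset.Icc 1 N).filter fun i => (stepFinset N ((m - 1) * L) i).Nonempty)
        (fun i => pattern m (fun k =>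
          (∑ j ∈ stepFinset N ((k : ℕ) * L) i, x j) / ((stepFinset N ((k : ℕ) * L) i).card : ℝ))) := by
  rw [filter_stepFinset_nonempty]
  refine shannonF_congr fun i hi => ?_
  congr 1
  funext k
  have hk : (k : ℕ) * L ≤ (m - 1) * L := Nat.mul_le_mul_right L (by omega)
  rw [average_stepFinset (by simp only [mem_Icc] at hi; omega)]

theorem stmt8 (N m L : ℕ) (hm : 2 ≤ m) (hL : 1 ≤ L) (x : ℕ → ℝ) :
    shannonF (Finset.Icc 1 (N - (m - 1) * L))
      (fun i => pattern m (fun k => x (i + (k : ℕ) * L)))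
      = shannonF ((Finset.Icc 1 N).filter fun i => (stepFinset N ((m - 1) * L) i).Nonempty)
        (fun i => pattern m (fun k =>
          (∑ j ∈ stepFinset N ((k : ℕ) * L) i, x j) / ((stepFinset N ((k : ℕ) * L) i).card : ℝ))) :=
  stmt8_general N m L x
end

section
/- Let G be a finite simple undirected graph with no isolated vertices, X : V → ℝ, and let E₀ be a set of non-edges {i,j} with Δx_i < 0 < Δx_j and x_i < x_j (where i denotes the endpoint with negative Δ). Then for any subset E' ⊆ E₀, adding all edges of E' simultaneously to G preserves the sign of Δx_v at every vertex v ∈ V, and hence preserves the m = 2 permutation entropy: PE_G = PE_{G+E'}. -/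
open Finset

open scoped Classical in
theorem stmt18 {V : Type*} [Fintype V] (G : SimpleGraph V)
    (hiso : ∀ v, ∃ w, G.Adj v w) (x : V → ℝ)
    (E0 : Set (Sym2 V))
    (hE0 : E0 = {e | ∃ i j : V, e = s(i, j) ∧ ¬ G.Adj i j ∧ i ≠ j ∧
      glap G x i < 0 ∧ 0 < glap G x j ∧ x i < x j})
    (E' : Set (Sym2 V)) (hE' : E' ⊆ E0) :
    (∀ v, Real.sign (glap (G ⊔ SimpleGraph.fromEdgeSet E') x v)
      = Real.sign (glap G x v)) ∧
    shannonF Finset.univ (fun v => Real.sign (glap (G ⊔ SimpleGraph.fromEdgeSet E') x v))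
      = shannonF Finset.univ (fun v => Real.sign (glap G x v)) := by
  set G' := G ⊔ SimpleGraph.fromEdgeSet E' with hG'
  have hadj : ∀ a b, G'.Adj a b ↔ G.Adj a b ∨ (s(a,b) ∈ E' ∧ a ≠ b) := by
    intro a b
    simp [hG', SimpleGraph.fromEdgeSet_adj, SimpleGraph.sup_adj]
  have main : ∀ v, Real.sign (glap G' x v) = Real.sign (glap G x v) := by
    intro v
    set N : Finset V := Finset.univ.filter (fun j => s(v,j) ∈ E' ∧ v ≠ j ∧ ¬ G.Adj v j)
      with hNdef
    have hsplit : ∀ j, (G'.Adj v j ↔ G.Adj v j ∨ j ∈ N) := by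
      intro j
      rw [hadj]
      constructor
      · rintro (h | ⟨he, hne⟩)
        · exact Or.inl h
        · by_cases hg : G.Adj v j
          · exact Or.inl hg
          · exact Or.inr (by simp [hNdef, he, hne, hg])
      · rintro (h | h)
        · exact Or.inl h
        · simp only [hNdef, Finset.mem_filter] at h
          exact Or.inr ⟨h.2.1, h.2.2.1⟩
    have hNnotadj : ∀ j ∈ N, ¬ G.Adj v j := by
      intro j hj; simp only [hNdef, Finset.mem_filter] at hj; exact hj.2.2.2
    have hdeg : gdeg G' v = gdeg G v + N.card := by
      have hgd : gdeg G' v = (∑ j, if G'.Adj v j then (1:ℝ) else 0) := by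
        unfold gdeg; congr!
      rw [hgd, show gdeg G v = (∑ j, if G.Adj v j then (1:ℝ) else 0) from rfl]
      have : ∀ j : V, (if G'.Adj v j then (1:ℝ) else 0)
          = (if G.Adj v j then (1:ℝ) else 0) + (if j ∈ N then (1:ℝ) else 0) := by
        intro j
        by_cases h1 : G.Adj v j
        · have : G'.Adj v j := (hsplit j).mpr (Or.inl h1)
          have h2 : j ∉ N := fun hj => (hNnotadj j hj) h1
          simp [h1, h2, this]
        · by_cases h2 : j ∈ N
          · have : G'.Adj v j := (hsplit j).mpr (Or.inr h2)
            simp [h1, h2, this]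
          · have : ¬ G'.Adj v j := fun h => by
              rcases (hsplit j).mp h with h | h
              exacts [h1 h, h2 h]
            simp [h1, h2, this]
      rw [Finset.sum_congr rfl (fun j _ => this j), Finset.sum_add_distrib]
      congr 1
      simp [Finset.sum_ite_mem]
    have hsum : (∑ j, if G'.Adj v j then x j else 0)
        = (∑ j, if G.Adj v j then x j else 0) + ∑ j ∈ N, x j := by
      have : ∀ j : V, (if G'.Adj v j then x j else 0)
          = (if G.Adj v j then x j else 0) + (if j ∈ N then x j else 0) := by
        intro j
        by_cases h1 : G.Adj v j
        · have : G'.Adj v j := (hsplit j).mpr (Or.inl h1)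
          have h2 : j ∉ N := fun hj => (hNnotadj j hj) h1
          simp [h1, h2, this]
        · by_cases h2 : j ∈ N
          · have : G'.Adj v j := (hsplit j).mpr (Or.inr h2)
            simp [h1, h2, this]
          · have : ¬ G'.Adj v j := fun h => by
              rcases (hsplit j).mp h with h | h
              exacts [h1 h, h2 h]
            simp [h1, h2, this]
      rw [Finset.sum_congr rfl (fun j _ => this j), Finset.sum_add_distrib]
      congr 1
      simp [Finset.sum_ite_mem]
    have hd : 0 < gdeg G v := by
      obtain ⟨w, hw⟩ := hiso v
      have h1 : (1:ℝ) ≤ gdeg G v := by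
        have := Finset.single_le_sum
          (f := fun j => if G.Adj v j then (1:ℝ) else 0)
          (fun j _ => by positivity) (Finset.mem_univ w)
        simpa [gdeg, hw] using this
      linarith
    have hd' : 0 < gdeg G' v := by
      rw [hdeg]; positivity
    have hNprop : ∀ j ∈ N, (glap G x v < 0 ∧ x v < x j) ∨ (0 < glap G x v ∧ x j < x v) := by
      intro j hj
      simp only [hNdef, Finset.mem_filter] at hj
      have he0 := hE' hj.2.1
      rw [hE0] at he0
      obtain ⟨i', j', heq, _, _, hneg, hpos, hlt⟩ := he0
      rw [Sym2.eq_iff] at heq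
      rcases heq with ⟨hv, hj'⟩ | ⟨hv, hj'⟩
      · subst hv; subst hj'; exact Or.inl ⟨hneg, hlt⟩
      · subst hv; subst hj'; exact Or.inr ⟨hpos, hlt⟩
    set S := (∑ j, if G.Adj v j then x j else 0) with hS
    set T := (∑ j ∈ N, x j) with hT
    have hglap : glap G x v = x v - S / gdeg G v := rfl
    have hglap' : glap G' x v = x v - (S + T) / (gdeg G v + N.card) := by
      have hgl : glap G' x v
          = x v - (∑ j, if G'.Adj v j then x j else 0) / gdeg G' v := by
        unfold glap; congr!
      rw [hgl, hsum, hdeg]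
    rcases lt_trichotomy (glap G x v) 0 with hcase | hcase | hcase
    · -- negative case
      have hxS : x v * gdeg G v < S := by
        rw [hglap, sub_neg] at hcase
        exact (lt_div_iff₀ hd).mp hcase
      have hTlb : (N.card : ℝ) * x v ≤ T := by
        rw [hT]
        calc (N.card : ℝ) * x v = ∑ _j ∈ N, x v := by
              rw [Finset.sum_const, nsmul_eq_mul]
        _ ≤ ∑ j ∈ N, x j := Finset.sum_le_sum (fun j hj => by
              rcases hNprop j hj with ⟨_, h⟩ | ⟨h, _⟩
              · exact h.le
              · linarith)
      have hneg' : glap G' x v < 0 := by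
        rw [hglap', sub_neg, lt_div_iff₀ (by rw [hdeg] at hd'; exact hd')]
        nlinarith
      rw [Real.sign_of_neg hneg', Real.sign_of_neg hcase]
    · -- zero case
      have hNempty : N = ∅ := by
        by_contra h
        obtain ⟨j, hj⟩ := Finset.nonempty_of_ne_empty h
        rcases hNprop j hj with ⟨h1, _⟩ | ⟨h1, _⟩ <;> linarith
      have hT0 : T = 0 := by rw [hT, hNempty]; simp
      have hN0 : ((N.card : ℝ)) = 0 := by rw [hNempty]; simp
      have : glap G' x v = glap G x v := by
        rw [hglap', hglap, hT0, hN0, add_zero, add_zero]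
      rw [this]
    · -- positive case
      have hxS : S < x v * gdeg G v := by
        rw [hglap, sub_pos] at hcase
        exact (div_lt_iff₀ hd).mp hcase
      have hTub : T ≤ (N.card : ℝ) * x v := by
        rw [hT]
        calc (∑ j ∈ N, x j) ≤ ∑ _j ∈ N, x v := Finset.sum_le_sum (fun j hj => by
              rcases hNprop j hj with ⟨h, _⟩ | ⟨_, h⟩
              · linarith
              · exact h.le)
        _ = (N.card : ℝ) * x v := by rw [Finset.sum_const, nsmul_eq_mul]
      have hpos' : 0 < glap G' x v := by
        rw [hglap', sub_pos, div_lt_iff₀ (by rw [hdeg] at hd'; exact hd')]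
        nlinarith
      rw [Real.sign_of_pos hpos', Real.sign_of_pos hcase]
  refine ⟨main, ?_⟩
  congr 1
  funext v
  exact main v
end
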